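/- For any two spike trains S and S' (finite subsets of {0,1,...,T}) and cost parameter q ≥ 0, the Victor-Purpura distance VP_q(S,S'), defined as the minimum over partial bijections φ from S to S' of cost_q(φ) = |S \ dom(φ)| + |S' \ codom(φ)| + q·Σ_{t ∈ dom(φ)} |t - φ(t)|, satisfies the triangle inequality: VP_q(S,S'') ≤ VP_q(S,S') + VP_q(S',S''). -/
import Mathlib


/-- A partial bijection between finite sets of naturals, encoded as the finite
set of matched pairs: first coordinates lie in `S`, second coordinates in `S'`,
and no index is matched twice. -/
def IsPartialBijection (S S' : Finset ℕ) (M : Finset (ℕ × ℕ)) : Prop :=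
  (∀ p ∈ M, p.1 ∈ S ∧ p.2 ∈ S') ∧
    ∀ p ∈ M, ∀ p' ∈ M, (p.1 = p'.1 ∨ p.2 = p'.2) → p = p'

/-- The `q`-cost of a partial bijection: unmatched spikes of `S`, plus unmatched
spikes of `S'`, plus `q` times the total shift of matched spikes. -/
noncomputable def VPcost (q : ℝ) (S S' : Finset ℕ) (M : Finset (ℕ × ℕ)) : ℝ :=
  ((S \ M.image Prod.fst).card : ℝ) + ((S' \ M.image Prod.snd).card : ℝ) +
    q * ∑ p ∈ M, |(p.1 : ℝ) - (p.2 : ℝ)|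

/-- The Victor–Purpura distance: minimal `q`-cost over all partial bijections. -/
noncomputable def VP (q : ℝ) (S S' : Finset ℕ) : ℝ :=
  sInf {c | ∃ M : Finset (ℕ × ℕ), IsPartialBijection S S' M ∧ c = VPcost q S S' M}

namespace VPaux

lemma cost_nonneg {q : ℝ} (hq : 0 ≤ q) (S S' : Finset ℕ) (M : Finset (ℕ × ℕ)) :
    0 ≤ VPcost q S S' M := by
  unfold VPcost
  have h1 : (0:ℝ) ≤ ∑ p ∈ M, |(p.1 : ℝ) - (p.2 : ℝ)| :=
    Finset.sum_nonneg fun p _ => abs_nonneg _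
  positivity

lemma costSet_nonempty (q : ℝ) (S S' : Finset ℕ) :
    {c | ∃ M : Finset (ℕ × ℕ), IsPartialBijection S S' M ∧ c = VPcost q S S' M}.Nonempty := by
  exact ⟨VPcost q S S' ∅, ∅, ⟨by simp, by simp⟩, rfl⟩

lemma costSet_bddBelow {q : ℝ} (hq : 0 ≤ q) (S S' : Finset ℕ) :
    BddBelow {c | ∃ M : Finset (ℕ × ℕ), IsPartialBijection S S' M ∧ c = VPcost q S S' M} := by
  refine ⟨0, fun c hc => ?_⟩
  obtain ⟨M, _, rfl⟩ := hc
  exact cost_nonneg hq S S' M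

lemma costSet_finite (q : ℝ) (S S' : Finset ℕ) :
    {c | ∃ M : Finset (ℕ × ℕ), IsPartialBijection S S' M ∧ c = VPcost q S S' M}.Finite := by
  apply Set.Finite.subset (Set.Finite.image (VPcost q S S')
    ((S ×ˢ S').powerset : Finset (Finset (ℕ × ℕ))).finite_toSet)
  rintro c ⟨M, hM, rfl⟩
  refine ⟨M, ?_, rfl⟩
  simp only [Finset.mem_coe, Finset.mem_powerset]
  intro p hp
  exact Finset.mem_product.2 (hM.1 p hp)

lemma VP_mem {q : ℝ} (S S' : Finset ℕ) :
    ∃ M : Finset (ℕ × ℕ), IsPartialBijection S S' M ∧ VP q S S' = VPcost q S S' M :=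
  (costSet_nonempty q S S').csInf_mem (costSet_finite q S S')

lemma VP_le {q : ℝ} (hq : 0 ≤ q) {S S' : Finset ℕ} {M : Finset (ℕ × ℕ)}
    (hM : IsPartialBijection S S' M) : VP q S S' ≤ VPcost q S S' M :=
  csInf_le (costSet_bddBelow hq S S') ⟨M, hM, rfl⟩

lemma mem_swap {X : Finset (ℕ × ℕ)} {a b : ℕ} :
    (a, b) ∈ X.image Prod.swap ↔ (b, a) ∈ X := by
  constructor
  · intro h
    obtain ⟨⟨x, y⟩, hx, he⟩ := Finset.mem_image.1 h
    simp only [Prod.swap_prod_mk, Prod.mk.injEq] at he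
    obtain ⟨rfl, rfl⟩ := he
    exact hx
  · intro h
    exact Finset.mem_image.2 ⟨(b, a), h, rfl⟩

lemma image_swap_fst (X : Finset (ℕ × ℕ)) :
    (X.image Prod.swap).image Prod.fst = X.image Prod.snd := by
  rw [Finset.image_image]
  exact Finset.image_congr fun p _ => rfl

/-- Key card bound for the composition, on the `S` side. -/
lemma card_aux {S S' : Finset ℕ} {M1 M2 M : Finset (ℕ × ℕ)}
    (h1 : IsPartialBijection S S' M1)
    (hF : ∀ a, a ∈ M.image Prod.fst ↔
      ∃ b, (a, b) ∈ M1 ∧ b ∈ M2.image Prod.fst) :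
    (S \ M.image Prod.fst).card ≤
      (S \ M1.image Prod.fst).card + (S' \ M2.image Prod.fst).card := by
  classical
  set F := M.image Prod.fst
  set A1 := M1.image Prod.fst
  set A2 := M2.image Prod.fst
  have hsub : S \ F ⊆ (S \ A1) ∪ (A1 \ F) := by
    intro x hx
    rw [Finset.mem_sdiff] at hx
    by_cases h : x ∈ A1
    · exact Finset.mem_union_right _ (Finset.mem_sdiff.2 ⟨h, hx.2⟩)
    · exact Finset.mem_union_left _ (Finset.mem_sdiff.2 ⟨hx.1, h⟩)
  have step1 : (S \ F).card ≤ (S \ A1).card + (A1 \ F).card :=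
    le_trans (Finset.card_le_card hsub) (Finset.card_union_le _ _)
  set N : Finset (ℕ × ℕ) := M1.filter (fun p => p.2 ∉ A2) with hN
  have claim1 : A1 \ F ⊆ N.image Prod.fst := by
    intro a ha
    rw [Finset.mem_sdiff] at ha
    obtain ⟨p, hp, hpa⟩ := Finset.mem_image.1 ha.1
    refine Finset.mem_image.2 ⟨p, Finset.mem_filter.2 ⟨hp, ?_⟩, hpa⟩
    intro hb
    have hpe : (a, p.2) = p := by rw [← hpa]
    exact ha.2 ((hF a).2 ⟨p.2, hpe.symm ▸ hp, hb⟩)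
  have claim2 : N.image Prod.snd ⊆ S' \ A2 := by
    intro b hb
    obtain ⟨p, hp, hpb⟩ := Finset.mem_image.1 hb
    rw [Finset.mem_filter] at hp
    exact Finset.mem_sdiff.2 ⟨hpb ▸ (h1.1 p hp.1).2, hpb ▸ hp.2⟩
  have hNsub : N ⊆ M1 := Finset.filter_subset _ _
  have hinj : ∀ p ∈ N, ∀ p' ∈ N, p.2 = p'.2 → p = p' := by
    intro p hp p' hp' h
    exact h1.2 p (hNsub hp) p' (hNsub hp') (Or.inr h)
  have hcardN : (N.image Prod.snd).card = N.card := Finset.card_image_of_injOn hinj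
  have step2 : (A1 \ F).card ≤ (S' \ A2).card := by
    calc (A1 \ F).card ≤ (N.image Prod.fst).card := Finset.card_le_card claim1
    _ ≤ N.card := Finset.card_image_le
    _ = (N.image Prod.snd).card := hcardN.symm
    _ ≤ (S' \ A2).card := Finset.card_le_card claim2
  omega

/-- Composition of two partial bijections with cost bound. -/
lemma compose {q : ℝ} (hq : 0 ≤ q) {S S' S'' : Finset ℕ} {M1 M2 : Finset (ℕ × ℕ)}
    (h1 : IsPartialBijection S S' M1) (h2 : IsPartialBijection S' S'' M2) :
    ∃ M : Finset (ℕ × ℕ), IsPartialBijection S S'' M ∧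
      VPcost q S S'' M ≤ VPcost q S S' M1 + VPcost q S' S'' M2 := by
  classical
  set Tr : Finset ((ℕ × ℕ) × (ℕ × ℕ)) :=
    (M1 ×ˢ M2).filter (fun pp => pp.1.2 = pp.2.1) with hTr
  set M : Finset (ℕ × ℕ) := Tr.image (fun pp => (pp.1.1, pp.2.2)) with hM
  have hTrmem : ∀ pp : (ℕ × ℕ) × (ℕ × ℕ),
      pp ∈ Tr ↔ pp.1 ∈ M1 ∧ pp.2 ∈ M2 ∧ pp.1.2 = pp.2.1 := by
    intro pp
    simp [hTr, Finset.mem_filter, Finset.mem_product, and_assoc]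
  have hMmem : ∀ a c : ℕ, (a, c) ∈ M ↔ ∃ b, (a, b) ∈ M1 ∧ (b, c) ∈ M2 := by
    intro a c
    constructor
    · intro h
      obtain ⟨⟨⟨a1, b1⟩, ⟨b2, c2⟩⟩, hpp, heq⟩ := Finset.mem_image.1 h
      obtain ⟨hp1, hp2, hbe⟩ := (hTrmem _).1 hpp
      simp only [Prod.mk.injEq] at heq
      obtain ⟨rfl, rfl⟩ := heq
      simp only at hbe
      subst hbe
      exact ⟨b1, hp1, hp2⟩
    · rintro ⟨b, hab, hbc⟩
      exact Finset.mem_image.2 ⟨((a, b), (b, c)), (hTrmem _).2 ⟨hab, hbc, rfl⟩, rfl⟩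
  have hpb : IsPartialBijection S S'' M := by
    constructor
    · rintro ⟨a, c⟩ hp
      obtain ⟨b, hab, hbc⟩ := (hMmem a c).1 hp
      exact ⟨(h1.1 _ hab).1, (h2.1 _ hbc).2⟩
    · rintro ⟨a, c⟩ hp ⟨a', c'⟩ hp' hor
      obtain ⟨b, hab, hbc⟩ := (hMmem a c).1 hp
      obtain ⟨b', hab', hbc'⟩ := (hMmem a' c').1 hp'
      simp only at hor
      rcases hor with h | h
      · subst h
        have hb : ((a, b) : ℕ × ℕ) = (a, b') := h1.2 _ hab _ hab' (Or.inl rfl)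
        simp only [Prod.mk.injEq, true_and] at hb
        subst hb
        have hc : ((b, c) : ℕ × ℕ) = (b, c') := h2.2 _ hbc _ hbc' (Or.inl rfl)
        simp only [Prod.mk.injEq, true_and] at hc
        rw [hc]
      · subst h
        have hb : ((b, c) : ℕ × ℕ) = (b', c) := h2.2 _ hbc _ hbc' (Or.inr rfl)
        simp only [Prod.mk.injEq, and_true] at hb
        subst hb
        have ha : ((a, b) : ℕ × ℕ) = (a', b) := h1.2 _ hab _ hab' (Or.inr rfl)
        simp only [Prod.mk.injEq, and_true] at ha
        rw [ha]
  refine ⟨M, hpb, ?_⟩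
  -- card bound on the S side
  have hF : ∀ a, a ∈ M.image Prod.fst ↔ ∃ b, (a, b) ∈ M1 ∧ b ∈ M2.image Prod.fst := by
    intro a
    constructor
    · intro h
      obtain ⟨⟨x, y⟩, hp, hpa⟩ := Finset.mem_image.1 h
      simp only at hpa
      subst hpa
      obtain ⟨b, hab, hbc⟩ := (hMmem x y).1 hp
      exact ⟨b, hab, Finset.mem_image.2 ⟨(b, y), hbc, rfl⟩⟩
    · rintro ⟨b, hab, hb⟩
      obtain ⟨⟨x, y⟩, hp, hpb⟩ := Finset.mem_image.1 hb
      simp only at hpb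
      subst hpb
      have : (a, y) ∈ M := (hMmem a y).2 ⟨x, hab, hp⟩
      exact Finset.mem_image.2 ⟨(a, y), this, rfl⟩
  have card1 : (S \ M.image Prod.fst).card ≤
      (S \ M1.image Prod.fst).card + (S' \ M2.image Prod.fst).card :=
    card_aux h1 hF
  -- card bound on the S'' side, via swapping
  have hswap2 : IsPartialBijection S'' S' (M2.image Prod.swap) := by
    constructor
    · intro p hp
      obtain ⟨⟨x, y⟩, hr, hrp⟩ := Finset.mem_image.1 hp
      subst hrp
      exact ⟨(h2.1 _ hr).2, (h2.1 _ hr).1⟩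
    · intro p hp p' hp' hor
      obtain ⟨⟨x, y⟩, hr, rfl⟩ := Finset.mem_image.1 hp
      obtain ⟨⟨x', y'⟩, hr', rfl⟩ := Finset.mem_image.1 hp'
      have : ((x, y) : ℕ × ℕ) = (x', y') := by
        apply h2.2 _ hr _ hr'
        rcases hor with h | h
        · right; simpa using h
        · left; simpa using h
      simp only [Prod.mk.injEq] at this
      rw [this.1, this.2]
  have hF' : ∀ a, a ∈ (M.image Prod.swap).image Prod.fst ↔
      ∃ b, (a, b) ∈ M2.image Prod.swap ∧ b ∈ (M1.image Prod.swap).image Prod.fst := by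
    intro a
    rw [image_swap_fst, image_swap_fst]
    constructor
    · intro h
      obtain ⟨⟨x, y⟩, hp, hpa⟩ := Finset.mem_image.1 h
      simp only at hpa
      subst hpa
      obtain ⟨b, hab, hbc⟩ := (hMmem x y).1 hp
      exact ⟨b, mem_swap.2 hbc, Finset.mem_image.2 ⟨(x, b), hab, rfl⟩⟩
    · rintro ⟨b, hba, hb⟩
      obtain ⟨⟨x, y⟩, hp, hpb⟩ := Finset.mem_image.1 hb
      simp only at hpb
      subst hpb
      have : (x, a) ∈ M := (hMmem x a).2 ⟨y, hp, mem_swap.1 hba⟩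
      exact Finset.mem_image.2 ⟨(x, a), this, rfl⟩
  have card2' := card_aux hswap2 hF'
  rw [image_swap_fst, image_swap_fst, image_swap_fst] at card2'
  -- sum bound
  have hfstInj : ∀ pp ∈ Tr, ∀ qq ∈ Tr, pp.1 = qq.1 → pp = qq := by
    rintro ⟨⟨a1, b1⟩, ⟨b2, c2⟩⟩ hpp ⟨⟨a1', b1'⟩, ⟨b2', c2'⟩⟩ hqq h
    obtain ⟨hp1, hp2, hpe⟩ := (hTrmem _).1 hpp
    obtain ⟨hq1, hq2, hqe⟩ := (hTrmem _).1 hqq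
    simp only at hpe hqe
    subst hpe; subst hqe
    simp only [Prod.mk.injEq] at h ⊢
    obtain ⟨rfl, rfl⟩ := h
    have : ((b1, c2) : ℕ × ℕ) = (b1, c2') := h2.2 _ hp2 _ hq2 (Or.inl rfl)
    simp only [Prod.mk.injEq, true_and] at this
    simp [this]
  have hsndInj : ∀ pp ∈ Tr, ∀ qq ∈ Tr, pp.2 = qq.2 → pp = qq := by
    rintro ⟨⟨a1, b1⟩, ⟨b2, c2⟩⟩ hpp ⟨⟨a1', b1'⟩, ⟨b2', c2'⟩⟩ hqq h
    obtain ⟨hp1, hp2, hpe⟩ := (hTrmem _).1 hpp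
    obtain ⟨hq1, hq2, hqe⟩ := (hTrmem _).1 hqq
    simp only at hpe hqe
    subst hpe; subst hqe
    simp only [Prod.mk.injEq] at h ⊢
    obtain ⟨rfl, rfl⟩ := h
    have : ((a1, b1) : ℕ × ℕ) = (a1', b1) := h1.2 _ hp1 _ hq1 (Or.inr rfl)
    simp only [Prod.mk.injEq, and_true] at this
    simp [this]
  have hTrInj : ∀ pp ∈ Tr, ∀ qq ∈ Tr,
      (fun pp : (ℕ × ℕ) × (ℕ × ℕ) => (pp.1.1, pp.2.2)) pp =
      (fun pp : (ℕ × ℕ) × (ℕ × ℕ) => (pp.1.1, pp.2.2)) qq → pp = qq := by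
    rintro ⟨⟨a1, b1⟩, ⟨b2, c2⟩⟩ hpp ⟨⟨a1', b1'⟩, ⟨b2', c2'⟩⟩ hqq h
    obtain ⟨hp1, hp2, hpe⟩ := (hTrmem _).1 hpp
    obtain ⟨hq1, hq2, hqe⟩ := (hTrmem _).1 hqq
    simp only at hpe hqe
    subst hpe; subst hqe
    simp only [Prod.mk.injEq] at h
    obtain ⟨rfl, rfl⟩ := h
    have hb : ((a1, b1) : ℕ × ℕ) = (a1, b1') := h1.2 _ hp1 _ hq1 (Or.inl rfl)
    simp only [Prod.mk.injEq, true_and] at hb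
    subst hb
    have hc : ((b1, c2) : ℕ × ℕ) = (b1, c2) := h2.2 _ hp2 _ hq2 (Or.inl rfl)
    rfl
  have hsumM : ∑ p ∈ M, |(p.1 : ℝ) - (p.2 : ℝ)| =
      ∑ pp ∈ Tr, |(pp.1.1 : ℝ) - (pp.2.2 : ℝ)| := by
    rw [hM]
    exact Finset.sum_image hTrInj
  have e1 : ∑ pp ∈ Tr, |(pp.1.1 : ℝ) - (pp.1.2 : ℝ)| =
      ∑ p ∈ Tr.image Prod.fst, |(p.1 : ℝ) - (p.2 : ℝ)| :=
    (Finset.sum_image (s := Tr) (g := Prod.fst) (f := fun p : ℕ × ℕ => |(p.1 : ℝ) - (p.2 : ℝ)|) hfstInj).symm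
  have e2 : ∑ pp ∈ Tr, |(pp.2.1 : ℝ) - (pp.2.2 : ℝ)| =
      ∑ p ∈ Tr.image Prod.snd, |(p.1 : ℝ) - (p.2 : ℝ)| :=
    (Finset.sum_image (s := Tr) (g := Prod.snd) (f := fun p : ℕ × ℕ => |(p.1 : ℝ) - (p.2 : ℝ)|) hsndInj).symm
  have hsum1 : ∑ pp ∈ Tr, |(pp.1.1 : ℝ) - (pp.1.2 : ℝ)| ≤
      ∑ p ∈ M1, |(p.1 : ℝ) - (p.2 : ℝ)| := by
    rw [e1]
    apply Finset.sum_le_sum_of_subset_of_nonneg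
    · intro p hp
      obtain ⟨pp, hpp, rfl⟩ := Finset.mem_image.1 hp
      exact ((hTrmem pp).1 hpp).1
    · intro p _ _; exact abs_nonneg _
  have hsum2 : ∑ pp ∈ Tr, |(pp.2.1 : ℝ) - (pp.2.2 : ℝ)| ≤
      ∑ p ∈ M2, |(p.1 : ℝ) - (p.2 : ℝ)| := by
    rw [e2]
    apply Finset.sum_le_sum_of_subset_of_nonneg
    · intro p hp
      obtain ⟨pp, hpp, rfl⟩ := Finset.mem_image.1 hp
      exact ((hTrmem pp).1 hpp).2.1
    · intro p _ _; exact abs_nonneg _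
  have hsumtri : ∑ pp ∈ Tr, |(pp.1.1 : ℝ) - (pp.2.2 : ℝ)| ≤
      ∑ pp ∈ Tr, |(pp.1.1 : ℝ) - (pp.1.2 : ℝ)| +
      ∑ pp ∈ Tr, |(pp.2.1 : ℝ) - (pp.2.2 : ℝ)| := by
    rw [← Finset.sum_add_distrib]
    apply Finset.sum_le_sum
    intro pp hpp
    obtain ⟨_, _, hpe⟩ := (hTrmem pp).1 hpp
    calc |(pp.1.1 : ℝ) - (pp.2.2 : ℝ)| ≤
        |(pp.1.1 : ℝ) - (pp.1.2 : ℝ)| + |(pp.1.2 : ℝ) - (pp.2.2 : ℝ)| := abs_sub_le _ _ _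
    _ = |(pp.1.1 : ℝ) - (pp.1.2 : ℝ)| + |(pp.2.1 : ℝ) - (pp.2.2 : ℝ)| := by rw [hpe]
  have hsum : ∑ p ∈ M, |(p.1 : ℝ) - (p.2 : ℝ)| ≤
      ∑ p ∈ M1, |(p.1 : ℝ) - (p.2 : ℝ)| + ∑ p ∈ M2, |(p.1 : ℝ) - (p.2 : ℝ)| := by
    rw [hsumM]; exact le_trans hsumtri (add_le_add hsum1 hsum2)
  unfold VPcost
  have hmul : q * ∑ p ∈ M, |(p.1 : ℝ) - (p.2 : ℝ)| ≤
      q * (∑ p ∈ M1, |(p.1 : ℝ) - (p.2 : ℝ)| + ∑ p ∈ M2, |(p.1 : ℝ) - (p.2 : ℝ)|) :=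
    mul_le_mul_of_nonneg_left hsum hq
  have c1 : ((S \ M.image Prod.fst).card : ℝ) ≤
      ((S \ M1.image Prod.fst).card : ℝ) + ((S' \ M2.image Prod.fst).card : ℝ) := by
    exact_mod_cast card1
  have c2 : ((S'' \ M.image Prod.snd).card : ℝ) ≤
      ((S'' \ M2.image Prod.snd).card : ℝ) + ((S' \ M1.image Prod.snd).card : ℝ) := by
    exact_mod_cast card2'
  nlinarith [hmul, c1, c2]

end VPaux

/-- Triangle inequality for the Victor–Purpura distance. -/
theorem VP_triangle {T : ℕ} {S S' S'' : Finset ℕ}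
    (hS : S ⊆ Finset.range (T + 1)) (hS' : S' ⊆ Finset.range (T + 1))
    (hS'' : S'' ⊆ Finset.range (T + 1)) {q : ℝ} (hq : 0 ≤ q) :
    VP q S S'' ≤ VP q S S' + VP q S' S'' := by
  obtain ⟨M1, hM1, hv1⟩ := VPaux.VP_mem (q := q) S S'
  obtain ⟨M2, hM2, hv2⟩ := VPaux.VP_mem (q := q) S' S''
  obtain ⟨M, hM, hcost⟩ := VPaux.compose hq hM1 hM2
  calc VP q S S'' ≤ VPcost q S S'' M := VPaux.VP_le hq hM
  _ ≤ VPcost q S S' M1 + VPcost q S' S'' M2 := hcost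
  _ = VP q S S' + VP q S' S'' := by rw [hv1, hv2]
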